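/- arXiv:math/0601227 — 2 statements merged into one kernel-verified Lean document; each statement's English description precedes it below -/
import Mathlib

section
/- For every finite multigraph G, the identity ⟨G⟩ = μ^{p0(G)-1} B^{p1(G)} A^{|E(G)|-p1(G)} · χ(G; x, y) holds in Z[μ, A^{±1}, B^{±1}], where x = (A + μB)/A and y = (B + μA)/B, ⟨G⟩ = Σ_{S ⊆ E(G)} μ^{p0(G-S)+p1(G-S)-1} A^{|E(G)-S|} B^{|S|} is the Kauffman bracket polynomial of G, and χ is the Tutte polynomial. -/
open scoped Classical

noncomputable section

structure Multigraph where
  V : Type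
  E : Type
  [fintypeV : Fintype V]
  [fintypeE : Fintype E]
  ends : E → Sym2 V

attribute [instance] Multigraph.fintypeV Multigraph.fintypeE

namespace Multigraph

/-- The simple graph underlying a multigraph (loops and multiplicities dropped);
it has the same connectivity properties as the multigraph. -/
def toSimpleGraph (G : Multigraph) : SimpleGraph G.V where
  Adj v w := v ≠ w ∧ ∃ e : G.E, G.ends e = s(v, w)
  symm := by
    constructor
    rintro v w ⟨hne, e, he⟩
    exact ⟨hne.symm, e, by rw [he]; exact Sym2.eq_swap⟩
  loopless := ⟨fun v h => h.1 rfl⟩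

/-- `p0 G` is the number of connected components of `G`. -/
def p0 (G : Multigraph) : ℕ := Nat.card G.toSimpleGraph.ConnectedComponent

/-- The number of vertices of `G`. -/
def numV (G : Multigraph) : ℕ := Fintype.card G.V

/-- The number of edges of `G`. -/
def numE (G : Multigraph) : ℕ := Fintype.card G.E

/-- `p1 G = |E| - |V| + p0 G` is the cyclomatic number of `G`. -/
def p1 (G : Multigraph) : ℕ := G.numE + G.p0 - G.numV

/-- A multigraph is connected if it has exactly one connected component. -/
def Connected (G : Multigraph) : Prop := G.p0 = 1

/-- A loop is an edge whose two endpoints coincide. -/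
def IsLoop (G : Multigraph) (e : G.E) : Prop := (G.ends e).IsDiag

/-- The spanning subgraph of `G` with edge set `S`. -/
def spanning (G : Multigraph) (S : Set G.E) : Multigraph where
  V := G.V
  E := ↥S
  ends := fun e => G.ends e.1

/-- `G` with the edge `e` deleted. -/
def deleteEdge (G : Multigraph) (e : G.E) : Multigraph where
  V := G.V
  E := {f : G.E // f ≠ e}
  ends := fun f => G.ends f.1

/-- An isthmus is an edge whose deletion increases the number of components. -/
def IsIsthmus (G : Multigraph) (e : G.E) : Prop := G.p0 < (G.deleteEdge e).p0

/-- The setoid on vertices identifying the two endpoints of `e`. -/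
def contractSetoid (G : Multigraph) (e : G.E) : Setoid G.V :=
  Relation.EqvGen.setoid fun v w => G.ends e = s(v, w)

/-- `G` with the edge `e` contracted: `e` is deleted and its endpoints identified. -/
def contractEdge (G : Multigraph) (e : G.E) : Multigraph where
  V := Quotient (G.contractSetoid e)
  E := {f : G.E // f ≠ e}
  ends := fun f => (G.ends f.1).map (Quotient.mk (G.contractSetoid e))

/-- The rank `r(S) = |V(G)| - p0(V(G), S)` of a set of edges. -/
def rank (G : Multigraph) (S : Set G.E) : ℕ := G.numV - (G.spanning S).p0

/-- The Tutte polynomial (Whitney rank generating function)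
`χ(G; x, y) = ∑_{S ⊆ E} (x-1)^(r(E)-r(S)) (y-1)^(|S|-r(S))`, as an element of
`ℤ[x][y]` (so `x = Polynomial.C Polynomial.X` and `y = Polynomial.X`). -/
def tutte (G : Multigraph) : Polynomial (Polynomial ℤ) :=
  ∑ S : Finset G.E,
    Polynomial.C (Polynomial.X - 1) ^ (G.rank Set.univ - G.rank ↑S) *
      (Polynomial.X - Polynomial.C 1) ^ (S.card - G.rank ↑S)

/-- `tutteCoeff G i j` is the coefficient `v_{i,j}` of `x^i y^j` in the Tutte polynomial. -/
def tutteCoeff (G : Multigraph) (i j : ℕ) : ℤ := (G.tutte.coeff j).coeff i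

/-- Evaluation of the Tutte polynomial at `x`, `y` in a commutative ring. -/
def tutteEval {K : Type} [CommRing K] (G : Multigraph) (x y : K) : K :=
  Polynomial.eval₂ (Polynomial.eval₂RingHom (Int.castRingHom K) x) y G.tutte

/-- An isomorphism of multigraphs. -/
structure Iso (G H : Multigraph) where
  vEquiv : G.V ≃ H.V
  eEquiv : G.E ≃ H.E
  ends_eq : ∀ e : G.E, H.ends (eEquiv e) = (G.ends e).map vEquiv

/-- The disjoint union of two multigraphs. -/
def disjUnion (G H : Multigraph) : Multigraph where
  V := G.V ⊕ H.V
  E := G.E ⊕ H.E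
  ends := fun e =>
    Sum.elim (fun e => (G.ends e).map Sum.inl) (fun e => (H.ends e).map Sum.inr) e

def joinSetoid (G H : Multigraph) (v : G.V) (w : H.V) : Setoid (G.V ⊕ H.V) :=
  Relation.EqvGen.setoid fun a b => a = Sum.inl v ∧ b = Sum.inr w

/-- The one-vertex join `G * H`, identifying the vertex `v` of `G` with the vertex `w` of `H`. -/
def join (G H : Multigraph) (v : G.V) (w : H.V) : Multigraph where
  V := Quotient (G.joinSetoid H v w)
  E := G.E ⊕ H.E
  ends := fun e =>
    Sum.elim
      (fun e => (G.ends e).map fun a => Quotient.mk (G.joinSetoid H v w) (Sum.inl a))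
      (fun e => (H.ends e).map fun a => Quotient.mk (G.joinSetoid H v w) (Sum.inr a)) e

/-- A multigraph consisting of a single loop on a single vertex. -/
def IsSingleLoop (G : Multigraph) : Prop :=
  Fintype.card G.V = 1 ∧ Fintype.card G.E = 1 ∧ ∀ e : G.E, G.IsLoop e

/-- `G` can be expressed as a one-vertex join `G₁ * G₂` in which each factor has
more than one vertex or is a single loop. -/
def IsJoinDecomposable (G : Multigraph) : Prop :=
  ∃ (G₁ G₂ : Multigraph) (v₁ : G₁.V) (v₂ : G₂.V),
    Nonempty (Iso G (join G₁ G₂ v₁ v₂)) ∧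
    (1 < Fintype.card G₁.V ∨ G₁.IsSingleLoop) ∧
    (1 < Fintype.card G₂.V ∨ G₂.IsSingleLoop)

/-- A multigraph is 2-connected if it is connected and admits no one-vertex join
decomposition (equivalently, it is connected with no cut vertex). -/
def TwoConnected (G : Multigraph) : Prop := G.Connected ∧ ¬G.IsJoinDecomposable

end Multigraph
end

namespace Multigraph
noncomputable section

/-- The Kauffman bracket polynomial of a graph,
`⟨G⟩ = ∑_{S ⊆ E} μ^(p0(G-S)+p1(G-S)-1) A^(|E(G)-S|) B^(|S|)`, as an element of
`ℤ[μ, A, B] = MvPolynomial (Fin 3) ℤ` with `μ = X 0`, `A = X 1`, `B = X 2`;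
here `G - S` is the spanning subgraph obtained by deleting the edges of `S`. -/
def kbracket (G : Multigraph) : MvPolynomial (Fin 3) ℤ :=
  ∑ S : Finset G.E,
    MvPolynomial.X 0 ^
        ((G.spanning ((↑S : Set G.E)ᶜ)).p0 + (G.spanning ((↑S : Set G.E)ᶜ)).p1 - 1) *
      MvPolynomial.X 1 ^ (G.numE - S.card) * MvPolynomial.X 2 ^ S.card

end
end Multigraph


namespace KTaux

lemma card_cc_le_of_le {V : Type} [Finite V] {A B : SimpleGraph V} (h : A ≤ B) :
    Nat.card B.ConnectedComponent ≤ Nat.card A.ConnectedComponent := by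
  have hsurj : Function.Surjective
      (SimpleGraph.ConnectedComponent.map (SimpleGraph.Hom.ofLE h)) := by
    intro c
    refine c.ind fun v => ⟨A.connectedComponentMk v, ?_⟩
    simp [SimpleGraph.ConnectedComponent.map_mk]
  exact Nat.card_le_card_of_surjective _ hsurj

lemma reach_aux {V : Type} {A B : SimpleGraph V} {u v : V}
    (hAB : ∀ x y, B.Adj x y → A.Adj x y ∨ s(x, y) = s(u, v)) {x y : V}
    (h : B.Reachable x y) :
    A.Reachable x y ∨
      ((A.Reachable x u ∨ A.Reachable x v) ∧ (A.Reachable y u ∨ A.Reachable y v)) := by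
  obtain ⟨w⟩ := h
  induction w with
  | nil => exact Or.inl (.refl _)
  | @cons x z y h p ih =>
    rcases hAB _ _ h with ha | he
    · rcases ih with hr | ⟨hz, hy⟩
      · exact Or.inl (ha.reachable.trans hr)
      · exact Or.inr ⟨hz.imp ha.reachable.trans ha.reachable.trans, hy⟩
    · rw [Sym2.eq_iff] at he
      have hx : A.Reachable x u ∨ A.Reachable x v := by
        rcases he with ⟨h1, _⟩ | ⟨h1, _⟩
        · exact Or.inl (h1 ▸ SimpleGraph.Reachable.refl _)
        · exact Or.inr (h1 ▸ SimpleGraph.Reachable.refl _)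
      have hz' : A.Reachable z u ∨ A.Reachable z v := by
        rcases he with ⟨_, h2⟩ | ⟨_, h2⟩
        · exact Or.inr (h2 ▸ SimpleGraph.Reachable.refl _)
        · exact Or.inl (h2 ▸ SimpleGraph.Reachable.refl _)
      refine Or.inr ⟨hx, ?_⟩
      rcases ih with hr | ⟨_, hy⟩
      · exact hz'.imp hr.symm.trans hr.symm.trans
      · exact hy

/-- key cardinality lemma: if B's adjacency is A's plus possibly one extra pair u,v,
then #CC(A) ≤ #CC(B) + 1 -/
lemma card_cc_le_add_one {V : Type} [Finite V] {A B : SimpleGraph V} {u v : V}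
    (hle : A ≤ B)
    (hAB : ∀ x y, B.Adj x y → A.Adj x y ∨ s(x, y) = s(u, v)) :
    Nat.card A.ConnectedComponent ≤ Nat.card B.ConnectedComponent + 1 := by
  classical
  set φ := SimpleGraph.ConnectedComponent.map (SimpleGraph.Hom.ofLE hle)
  have key : ∀ c c' : A.ConnectedComponent, φ c = φ c' →
      c = c' ∨ ((c = A.connectedComponentMk u ∨ c = A.connectedComponentMk v) ∧
        (c' = A.connectedComponentMk u ∨ c' = A.connectedComponentMk v)) := by
    refine SimpleGraph.ConnectedComponent.ind₂ fun x y hmap => ?_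
    have hreach : B.Reachable x y := by
      simpa [φ, SimpleGraph.ConnectedComponent.map_mk,
        SimpleGraph.ConnectedComponent.eq] using hmap
    have := reach_aux hAB hreach
    simpa [SimpleGraph.ConnectedComponent.eq] using this
  have hinj : Function.Injective
      (fun c : A.ConnectedComponent =>
        if c = A.connectedComponentMk v then (Sum.inr () : B.ConnectedComponent ⊕ Unit)
        else Sum.inl (φ c)) := by
    intro c c' h
    by_cases h1 : c = A.connectedComponentMk v <;>
      by_cases h2 : c' = A.connectedComponentMk v <;> simp [h1, h2] at h
    · exact h1.trans h2.symm
    · rcases key _ _ h with h' | ⟨hc, hc'⟩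
      · exact h'
      · rcases hc with hc | hc
        · rcases hc' with hc' | hc'
          · exact hc.trans hc'.symm
          · exact absurd hc' h2
        · exact absurd hc h1
  calc Nat.card A.ConnectedComponent ≤ Nat.card (B.ConnectedComponent ⊕ Unit) :=
        Nat.card_le_card_of_injective _ hinj
    _ = Nat.card B.ConnectedComponent + 1 := by simp [Nat.card_sum]

end KTaux

namespace Multigraph
lemma sym2_exists {α : Type*} (z : Sym2 α) : ∃ u v, z = s(u, v) := by
  induction z using Sym2.ind with
  | _ a b => exact ⟨a, b, rfl⟩

lemma p0_le_numV (G : Multigraph) : G.p0 ≤ G.numV := by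
  have h : Function.Surjective G.toSimpleGraph.connectedComponentMk := by
    intro c; exact c.ind fun v => ⟨v, rfl⟩
  simpa [p0, numV, Nat.card_eq_fintype_card] using Nat.card_le_card_of_surjective _ h

lemma one_le_p0 (G : Multigraph) (h : 0 < G.numV) : 1 ≤ G.p0 := by
  rw [numV, Fintype.card_pos_iff] at h
  have : Nonempty G.toSimpleGraph.ConnectedComponent :=
    ⟨G.toSimpleGraph.connectedComponentMk h.some⟩
  exact Nat.card_pos

lemma numE_eq_zero (G : Multigraph) (h : G.numV = 0) : G.numE = 0 := by
  rw [numV, Fintype.card_eq_zero_iff] at h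
  rw [numE, Fintype.card_eq_zero_iff]
  refine ⟨fun e => ?_⟩
  obtain ⟨u, v, -⟩ := sym2_exists (G.ends e)
  exact h.false u

end Multigraph


namespace Multigraph
lemma deleteEdge_p0_le (G : Multigraph) (e : G.E) : (G.deleteEdge e).p0 ≤ G.p0 + 1 := by
  obtain ⟨u, v, huv⟩ := sym2_exists (G.ends e)
  have hle : (G.deleteEdge e).toSimpleGraph ≤ G.toSimpleGraph := by
    rintro x y ⟨hne, ⟨f, hm⟩, hf⟩
    exact ⟨hne, f, hf⟩
  have hAB : ∀ x y, G.toSimpleGraph.Adj x y →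
      (G.deleteEdge e).toSimpleGraph.Adj x y ∨ s(x, y) = s(u, v) := by
    rintro x y ⟨hne, f, hf⟩
    by_cases hfe : f = e
    · right; rw [← hf, hfe, huv]
    · exact Or.inl ⟨hne, ⟨f, hfe⟩, hf⟩
  exact KTaux.card_cc_le_add_one hle hAB

lemma numV_le_numE_add_p0 (G : Multigraph) : G.numV ≤ G.numE + G.p0 := by
  suffices h : ∀ (n : ℕ) (H : Multigraph), H.numE = n → H.numV ≤ n + H.p0 by
    exact h G.numE G rfl
  intro n
  induction n with
  | zero =>
    intro H hn
    have hE : IsEmpty H.E := by rwa [numE, Fintype.card_eq_zero_iff] at hn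
    have hbot : H.toSimpleGraph = ⊥ := by
      ext x y
      simp only [SimpleGraph.bot_adj, iff_false]
      rintro ⟨-, e, -⟩
      exact hE.false e
    have hinj : Function.Injective H.toSimpleGraph.connectedComponentMk := by
      intro x y h
      rw [SimpleGraph.ConnectedComponent.eq, hbot, SimpleGraph.reachable_bot] at h
      exact h
    have hsurj : Function.Surjective H.toSimpleGraph.connectedComponentMk :=
      fun c => c.ind fun v => ⟨v, rfl⟩
    have := Nat.card_eq_of_bijective _ ⟨hinj, hsurj⟩
    simp only [Nat.card_eq_fintype_card] at this
    rw [numV, p0, Nat.card_eq_fintype_card, ← this]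
    omega
  | succ n ih =>
    intro H hn
    have : Nonempty H.E := by
      rw [← Fintype.card_pos_iff]
      rw [numE] at hn
      omega
    obtain ⟨e⟩ := this
    have hcard : (H.deleteEdge e).numE = n := by
      have : Fintype.card {f : H.E // f ≠ e} = Fintype.card H.E - 1 := by
        rw [Fintype.card_subtype_compl (p := fun f => f = e), Fintype.card_subtype_eq]
      rw [numE] at hn ⊢
      show Fintype.card {f : H.E // f ≠ e} = n
      omega
    have h1 := ih (H.deleteEdge e) hcard
    have h2 := H.deleteEdge_p0_le e
    have h3 : (H.deleteEdge e).numV = H.numV := rfl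
    omega

lemma p0_le_spanning (G : Multigraph) (S : Set G.E) : G.p0 ≤ (G.spanning S).p0 := by
  have hle : (G.spanning S).toSimpleGraph ≤ G.toSimpleGraph := by
    rintro x y ⟨hne, ⟨f, hm⟩, hf⟩
    exact ⟨hne, f, hf⟩
  exact KTaux.card_cc_le_of_le hle

lemma spanning_univ_p0 (G : Multigraph) : (G.spanning Set.univ).p0 = G.p0 := by
  refine le_antisymm ?_ (G.p0_le_spanning _)
  have hle : G.toSimpleGraph ≤ (G.spanning Set.univ).toSimpleGraph := by
    rintro x y ⟨hne, f, hf⟩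
    exact ⟨hne, ⟨f, Set.mem_univ f⟩, hf⟩
  exact KTaux.card_cc_le_of_le hle

lemma spanning_numV (G : Multigraph) (S : Set G.E) : (G.spanning S).numV = G.numV := rfl

lemma spanning_numE (G : Multigraph) (T : Finset G.E) :
    (G.spanning (↑T : Set G.E)).numE = T.card := by
  have h1 : (G.spanning (↑T : Set G.E)).numE = Fintype.card ↥(↑T : Set G.E) :=
    Fintype.card_congr (Equiv.refl _)
  rw [h1]
  simp

/-- In `ℤ[μ, A^{±1}, B^{±1}]` (realized inside the fraction field of
`ℤ[μ,A,B]`) one has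
`⟨G⟩ = μ^(p0(G)-1) B^(p1(G)) A^(|E(G)|-p1(G)) ⋅ χ(G; (A+μB)/A, (B+μA)/B)`. -/
theorem kauffman_bracket_eq_tutte (G : Multigraph) :
    letI ι : MvPolynomial (Fin 3) ℤ →+* FractionRing (MvPolynomial (Fin 3) ℤ) :=
      algebraMap _ _
    ι G.kbracket =
      ι (MvPolynomial.X 0) ^ (G.p0 - 1) * ι (MvPolynomial.X 2) ^ G.p1 *
        ι (MvPolynomial.X 1) ^ (G.numE - G.p1) *
        G.tutteEval
          ((ι (MvPolynomial.X 1) + ι (MvPolynomial.X 0) * ι (MvPolynomial.X 2)) /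
            ι (MvPolynomial.X 1))
          ((ι (MvPolynomial.X 2) + ι (MvPolynomial.X 0) * ι (MvPolynomial.X 1)) /
            ι (MvPolynomial.X 2)) := by
  set R := MvPolynomial (Fin 3) ℤ
  set K := FractionRing R
  set ι : R →+* K := algebraMap R K with hι
  have hμ : ι (MvPolynomial.X 0) ≠ 0 := by
    rw [hι, ne_eq, IsFractionRing.to_map_eq_zero_iff]
    exact MvPolynomial.X_ne_zero _
  have ha : ι (MvPolynomial.X 1) ≠ 0 := by
    rw [hι, ne_eq, IsFractionRing.to_map_eq_zero_iff]
    exact MvPolynomial.X_ne_zero _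
  have hb : ι (MvPolynomial.X 2) ≠ 0 := by
    rw [hι, ne_eq, IsFractionRing.to_map_eq_zero_iff]
    exact MvPolynomial.X_ne_zero _
  set μ : K := ι (MvPolynomial.X 0)
  set a : K := ι (MvPolynomial.X 1)
  set b : K := ι (MvPolynomial.X 2)
  simp only [kbracket, tutteEval, tutte, map_sum, Polynomial.eval₂_finset_sum,
    Finset.mul_sum, map_mul, map_pow]
  refine Fintype.sum_equiv ⟨compl, compl, compl_compl, compl_compl⟩ _ _ fun S => ?_
  simp only [Equiv.coe_fn_mk, ← Finset.coe_compl]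
  simp only [Polynomial.eval₂_mul, Polynomial.eval₂_pow, Polynomial.eval₂_C,
    Polynomial.eval₂_X, Polynomial.eval₂_sub, Polynomial.eval₂_one,
    Polynomial.coe_eval₂RingHom, map_one]
  have hx1 : (a + μ * b) / a - 1 = μ * b / a := by rw [div_sub_one ha]; ring
  have hy1 : (b + μ * a) / b - 1 = μ * a / b := by rw [div_sub_one hb]; ring
  rw [hx1, hy1, div_pow, div_pow,
    div_mul_div_comm ((μ * b) ^ (G.rank Set.univ - G.rank ↑(Sᶜ)))
      (a ^ (G.rank Set.univ - G.rank ↑(Sᶜ)))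
      ((μ * a) ^ (Sᶜ.card - G.rank ↑(Sᶜ))) (b ^ (Sᶜ.card - G.rank ↑(Sᶜ))),
    ← mul_div_assoc,
    eq_div_iff (mul_ne_zero (pow_ne_zero _ ha) (pow_ne_zero _ hb))]
  have f1 := G.p0_le_spanning (↑(Sᶜ) : Set G.E)
  have f2 : (G.spanning (↑(Sᶜ) : Set G.E)).p0 ≤ G.numV := by
    have := (G.spanning (↑(Sᶜ) : Set G.E)).p0_le_numV
    rwa [spanning_numV] at this
  have f3 : G.numV ≤ Sᶜ.card + (G.spanning (↑(Sᶜ) : Set G.E)).p0 := by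
    have := (G.spanning (↑(Sᶜ) : Set G.E)).numV_le_numE_add_p0
    rwa [spanning_numV, spanning_numE] at this
  have f4 := G.numV_le_numE_add_p0
  have f5 : Sᶜ.card ≤ G.numE := by
    rw [numE, ← Finset.card_univ]
    exact Finset.card_le_univ _
  have f8 := G.p0_le_numV
  have f10 : S.card + Sᶜ.card = G.numE := by
    rw [numE, ← Finset.card_add_card_compl S]
  have f67 : (G.numV = 0 ∧ G.numE = 0) ∨
      (1 ≤ G.p0 ∧ 1 ≤ (G.spanning (↑(Sᶜ) : Set G.E)).p0) := by
    rcases Nat.eq_zero_or_pos G.numV with h | h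
    · exact Or.inl ⟨h, G.numE_eq_zero h⟩
    · exact Or.inr ⟨G.one_le_p0 h,
        (G.spanning (↑(Sᶜ) : Set G.E)).one_le_p0 (by rwa [spanning_numV])⟩
  have e1 : (G.spanning (↑(Sᶜ) : Set G.E)).p0 + (G.spanning (↑(Sᶜ) : Set G.E)).p1 - 1 =
      (G.p0 - 1) + (G.rank Set.univ - G.rank ↑(Sᶜ)) + (Sᶜ.card - G.rank ↑(Sᶜ)) := by
    simp only [p1, rank, spanning_numE, spanning_numV, spanning_univ_p0]
    rcases f67 with h | h <;> omega
  have e2 : (G.numE - S.card) + (G.rank Set.univ - G.rank ↑(Sᶜ)) =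
      (G.numE - G.p1) + (Sᶜ.card - G.rank ↑(Sᶜ)) := by
    simp only [p1, rank, spanning_numE, spanning_numV, spanning_univ_p0]
    rcases f67 with h | h <;> omega
  have e3 : S.card + (Sᶜ.card - G.rank ↑(Sᶜ)) =
      G.p1 + (G.rank Set.univ - G.rank ↑(Sᶜ)) := by
    simp only [p1, rank, spanning_numE, spanning_numV, spanning_univ_p0]
    rcases f67 with h | h <;> omega
  calc μ ^ ((G.spanning (↑(Sᶜ) : Set G.E)).p0 + (G.spanning (↑(Sᶜ) : Set G.E)).p1 - 1) *
        a ^ (G.numE - S.card) * b ^ S.card *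
        (a ^ (G.rank Set.univ - G.rank ↑(Sᶜ)) * b ^ (Sᶜ.card - G.rank ↑(Sᶜ)))
      = μ ^ ((G.spanning (↑(Sᶜ) : Set G.E)).p0 + (G.spanning (↑(Sᶜ) : Set G.E)).p1 - 1) *
        a ^ ((G.numE - S.card) + (G.rank Set.univ - G.rank ↑(Sᶜ))) *
        b ^ (S.card + (Sᶜ.card - G.rank ↑(Sᶜ))) := by ring
    _ = μ ^ ((G.p0 - 1) + (G.rank Set.univ - G.rank ↑(Sᶜ)) + (Sᶜ.card - G.rank ↑(Sᶜ))) *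
        a ^ ((G.numE - G.p1) + (Sᶜ.card - G.rank ↑(Sᶜ))) *
        b ^ (G.p1 + (G.rank Set.univ - G.rank ↑(Sᶜ))) := by rw [e1, e2, e3]
    _ = μ ^ (G.p0 - 1) * b ^ G.p1 * a ^ (G.numE - G.p1) *
        ((μ * b) ^ (G.rank Set.univ - G.rank ↑(Sᶜ)) * (μ * a) ^ (Sᶜ.card - G.rank ↑(Sᶜ))) := by
      ring

end Multigraph
end

section
/- Let G be a 2-color graph (not necessarily connected) with edges colored black (b) and white (w), and let G_b (respectively G_w) be the spanning subgraph of G on all vertices of G with only the black (respectively white) edges. Then p0(G_b) + p0(G_w) ≤ |V(G)| + p0(G), and equality holds if and only if G contains no 2-colored cycle, i.e., every cycle of G consists entirely of black edges or entirely of white edges. -/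
open scoped Classical

namespace Multigraph

/-- A cycle of length `n` in a multigraph: distinct vertices `v 0, …, v (n-1)` and
distinct edges `e 0, …, e (n-1)` such that the edge `e i` joins the vertices `v i`
and `v (i+1)` (indices mod `n`). -/
structure CycleIn (G : Multigraph) (n : ℕ) where
  vtx : ZMod n → G.V
  edge : ZMod n → G.E
  vtx_inj : Function.Injective vtx
  edge_inj : Function.Injective edge
  ends_eq : ∀ i : ZMod n, G.ends (edge i) = s(vtx i, vtx (i + 1))

/-- Every cycle of `G` is monochromatic with respect to the edge 2-coloring `c`
(`true` = black, `false` = white), i.e. `G` has no 2-colored cycle. -/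
def MonochromaticCycles (G : Multigraph) (c : G.E → Bool) : Prop :=
  ∀ (n : ℕ) (C : CycleIn G n) (i j : ZMod n), c (C.edge i) = c (C.edge j)

end Multigraph

namespace Multigraph

/-! ### Auxiliary infrastructure for the proof -/

section Counting

/-- Key abstract counting lemma: enlarging an equivalence relation on a finite type by
one generating pair `(u, v)` keeps the number of classes if `u ~ v` already, and
decreases it by one otherwise. -/
lemma card_quot_insert_pair {α : Type} [Finite α] (r s : α → α → Prop)
    (hr : Equivalence r) (hs : Equivalence s) (u v : α)
    (h : ∀ x y, s x y ↔ r x y ∨ (r x u ∧ r v y) ∨ (r x v ∧ r u y)) :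
    (r u v → Nat.card (Quot s) = Nat.card (Quot r)) ∧
    (¬ r u v → Nat.card (Quot s) + 1 = Nat.card (Quot r)) := by
  have hmkr : ∀ x y : α, Quot.mk r x = Quot.mk r y ↔ r x y := by
    intro x y
    exact ⟨fun hxy => hr.eqvGen_iff.mp (Quot.eqvGen_exact hxy), fun hxy => Quot.sound hxy⟩
  have hrs : ∀ {x y : α}, r x y → s x y := fun hxy => (h _ _).mpr (Or.inl hxy)
  have hsuv : s u v := (h u v).mpr (Or.inr (Or.inl ⟨hr.refl u, hr.refl v⟩))
  constructor
  · intro huv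
    refine Nat.card_congr (Quot.congrRight fun a b => ?_)
    rw [h]
    constructor
    · rintro (h' | ⟨h1, h2⟩ | ⟨h1, h2⟩)
      · exact h'
      · exact hr.trans h1 (hr.trans huv h2)
      · exact hr.trans h1 (hr.trans (hr.symm huv) h2)
    · exact Or.inl
  · intro huv
    classical
    -- the map sending an `s`-class to an `r`-class
    have wd : ∀ x y : α, s x y →
        (if s x u then Quot.mk r u else Quot.mk r x) =
          (if s y u then Quot.mk r u else Quot.mk r y) := by
      intro x y hxy
      by_cases hxu : s x u
      · have hyu : s y u := hs.trans (hs.symm hxy) hxu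
        rw [if_pos hxu, if_pos hyu]
      · have hyu : ¬ s y u := fun hyu => hxu (hs.trans hxy hyu)
        rw [if_neg hxu, if_neg hyu]
        rcases (h x y).mp hxy with h' | ⟨h1, _⟩ | ⟨h1, _⟩
        · exact Quot.sound h'
        · exact absurd (hrs h1) hxu
        · exact absurd (hs.trans (hrs h1) (hs.symm hsuv)) hxu
    set g : Quot s → Quot r :=
      Quot.lift (fun x => if s x u then Quot.mk r u else Quot.mk r x) wd with hg
    have hgmk : ∀ x : α, g (Quot.mk s x) = if s x u then Quot.mk r u else Quot.mk r x :=
      fun _ => rfl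
    set F : Quot s ⊕ Unit → Quot r := Sum.elim g (fun _ => Quot.mk r v) with hF
    have hginj : Function.Injective g := by
      intro a b
      induction a using Quot.ind with | _ x =>
      induction b using Quot.ind with | _ y =>
      intro hab
      rw [hgmk, hgmk] at hab
      by_cases hxu : s x u <;> by_cases hyu : s y u
      · rw [if_pos hxu, if_pos hyu] at hab
        exact Quot.sound (hs.trans hxu (hs.symm hyu))
      · rw [if_pos hxu, if_neg hyu] at hab
        have : r u y := (hmkr _ _).mp hab
        exact absurd (hs.symm (hrs this)) hyu
      · rw [if_neg hxu, if_pos hyu] at hab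
        have : r x u := (hmkr _ _).mp hab
        exact absurd (hrs this) hxu
      · rw [if_neg hxu, if_neg hyu] at hab
        exact Quot.sound (hrs ((hmkr _ _).mp hab))
    have hgv : ∀ a : Quot s, g a ≠ Quot.mk r v := by
      intro a
      induction a using Quot.ind with | _ x =>
      rw [hgmk]
      by_cases hxu : s x u
      · rw [if_pos hxu]
        intro hc
        exact huv ((hmkr _ _).mp hc)
      · rw [if_neg hxu]
        intro hc
        have hxv : r x v := (hmkr _ _).mp hc
        exact hxu (hs.trans (hrs hxv) (hs.symm hsuv))
    have hFbij : Function.Bijective F := by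
      constructor
      · rintro (a | a) (b | b) hab
        · simp only [hF, Sum.elim_inl] at hab
          exact congrArg Sum.inl (hginj hab)
        · simp only [hF, Sum.elim_inl, Sum.elim_inr] at hab
          exact absurd hab (hgv a)
        · simp only [hF, Sum.elim_inl, Sum.elim_inr] at hab
          exact absurd hab.symm (hgv b)
        · rfl
      · intro q
        induction q using Quot.ind with | _ y =>
        by_cases hyv : r y v
        · exact ⟨Sum.inr (), Quot.sound (hr.symm hyv)⟩
        · refine ⟨Sum.inl (Quot.mk s y), ?_⟩
          simp only [hF, Sum.elim_inl, hgmk]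
          by_cases hyu : s y u
          · rw [if_pos hyu]
            rcases (h y u).mp hyu with h' | ⟨h1, h2⟩ | ⟨h1, _⟩
            · exact Quot.sound (hr.symm h')
            · exact absurd (hr.symm h2) huv
            · exact absurd h1 hyv
          · rw [if_neg hyu]
    have := Nat.card_congr (Equiv.ofBijective F hFbij)
    rw [Nat.card_sum] at this
    simpa using this

end Counting

variable {G : Multigraph}

/-- The one-step relation on vertices given by the edges in `S`. -/
def ERel (G : Multigraph) (S : Set G.E) (x y : G.V) : Prop := ∃ e ∈ S, G.ends e = s(x, y)

/-- Connectivity (reachability) using only edges in `S`. -/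
def conn (G : Multigraph) (S : Set G.E) : G.V → G.V → Prop :=
  Relation.EqvGen (G.ERel S)

lemma conn_equivalence (G : Multigraph) (S : Set G.E) : Equivalence (G.conn S) :=
  Relation.EqvGen.is_equivalence _

lemma conn_mono {S T : Set G.E} (hST : S ⊆ T) {x y : G.V} (h : G.conn S x y) :
    G.conn T x y :=
  Relation.EqvGen.mono (r := G.ERel S) (p := G.ERel T)
    (by rintro a b ⟨e, he, h2⟩; exact ⟨e, hST he, h2⟩) _ _ h

lemma toSimpleGraph_adj {H : Multigraph} {v w : H.V} :
    H.toSimpleGraph.Adj v w ↔ v ≠ w ∧ ∃ e : H.E, H.ends e = s(v, w) := Iff.rfl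

lemma reachable_iff_eqvGen (H : Multigraph) (u v : H.V) :
    H.toSimpleGraph.Reachable u v ↔
      Relation.EqvGen (fun x y => ∃ e, H.ends e = s(x, y)) u v := by
  constructor
  · intro h
    rw [SimpleGraph.reachable_iff_reflTransGen] at h
    induction h with
    | refl => exact Relation.EqvGen.refl _
    | tail _ ha ih => exact Relation.EqvGen.trans _ _ _ ih (Relation.EqvGen.rel _ _ (toSimpleGraph_adj.mp ha).2)
  · intro h
    induction h with
    | rel x y hxy =>
      by_cases hxy' : x = y
      · subst hxy'; exact SimpleGraph.Reachable.refl _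
      · exact SimpleGraph.Adj.reachable (toSimpleGraph_adj.mpr ⟨hxy', hxy⟩)
    | refl x => exact SimpleGraph.Reachable.refl _
    | symm x y _ ih => exact ih.symm
    | trans x y z _ _ ih1 ih2 => exact ih1.trans ih2

lemma spanning_reachable_iff {S : Set G.E} (u v : G.V) :
    (G.spanning S).toSimpleGraph.Reachable u v ↔ G.conn S u v := by
  refine (reachable_iff_eqvGen (G.spanning S) u v).trans ?_
  constructor <;> intro h <;> refine Relation.EqvGen.mono ?_ _ _ h
  · rintro a b ⟨e, he⟩
    exact ⟨e.1, e.2, he⟩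
  · rintro a b ⟨e, he, h2⟩
    exact ⟨⟨e, he⟩, h2⟩

/-- `p0S G S` is the number of components of the spanning subgraph with edge set `S`. -/
noncomputable def p0S (G : Multigraph) (S : Set G.E) : ℕ := Nat.card (Quot (G.conn S))

lemma spanning_p0 (S : Set G.E) : (G.spanning S).p0 = G.p0S S :=
  Nat.card_congr (Quot.congrRight fun a b => spanning_reachable_iff (G := G) (S := S) a b)

lemma p0_eq_p0S_univ : G.p0 = G.p0S Set.univ := by
  refine Nat.card_congr (Quot.congrRight fun a b => ?_)
  rw [reachable_iff_eqvGen]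
  constructor <;> intro h <;> refine Relation.EqvGen.mono ?_ _ _ h
  · rintro a b ⟨e, he⟩
    exact ⟨e, trivial, he⟩
  · rintro a b ⟨e, _, h2⟩
    exact ⟨e, h2⟩

lemma conn_empty_iff {x y : G.V} : G.conn ∅ x y ↔ x = y := by
  constructor
  · intro h
    induction h with
    | rel a b hab => exact absurd hab.choose_spec.1 (Set.notMem_empty _)
    | refl a => rfl
    | symm a b _ ih => exact ih.symm
    | trans a b c' _ _ ih1 ih2 => exact ih1.trans ih2
  · rintro rfl
    exact Relation.EqvGen.refl _

lemma p0S_empty : G.p0S ∅ = G.numV := by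
  have h : Quot (G.conn ∅) ≃ G.V := by
    refine Equiv.ofBijective (Quot.lift id fun a b hab => conn_empty_iff.mp hab) ⟨?_, ?_⟩
    · intro a b
      induction a using Quot.ind with | _ x =>
      induction b using Quot.ind with | _ y =>
      intro hxy
      exact congrArg _ hxy
    · intro a
      exact ⟨Quot.mk _ a, rfl⟩
  rw [p0S, Nat.card_congr h, Nat.card_eq_fintype_card, numV]

lemma conn_insert {S : Set G.E} {e : G.E} {u v : G.V} (hends : G.ends e = s(u, v))
    (x y : G.V) :
    G.conn (insert e S) x y ↔
      G.conn S x y ∨ (G.conn S x u ∧ G.conn S v y) ∨ (G.conn S x v ∧ G.conn S u y) := by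
  have hE := G.conn_equivalence S
  have hsymm : ∀ {a b : G.V}, G.conn S a b → G.conn S b a := fun h => hE.symm h
  have htrans : ∀ {a b d : G.V}, G.conn S a b → G.conn S b d → G.conn S a d :=
    fun h1 h2 => hE.trans h1 h2
  have hrefl : ∀ a : G.V, G.conn S a a := fun a => hE.refl a
  constructor
  · intro h
    induction h with
    | rel a b hab =>
      obtain ⟨f, hf, hfe⟩ := hab
      rcases Set.mem_insert_iff.mp hf with rfl | hfS
      · rw [hends] at hfe
        rcases Sym2.eq_iff.mp hfe with ⟨rfl, rfl⟩ | ⟨rfl, rfl⟩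
        · exact Or.inr (Or.inl ⟨hrefl _, hrefl _⟩)
        · exact Or.inr (Or.inr ⟨hrefl _, hrefl _⟩)
      · exact Or.inl (Relation.EqvGen.rel _ _ ⟨f, hfS, hfe⟩)
    | refl a => exact Or.inl (hrefl a)
    | symm a b _ ih =>
      rcases ih with h' | ⟨h1, h2⟩ | ⟨h1, h2⟩
      · exact Or.inl (hsymm h')
      · exact Or.inr (Or.inr ⟨hsymm h2, hsymm h1⟩)
      · exact Or.inr (Or.inl ⟨hsymm h2, hsymm h1⟩)
    | trans a b d _ _ ih1 ih2 =>
      rcases ih1 with h' | ⟨h1, h2⟩ | ⟨h1, h2⟩ <;>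
        rcases ih2 with h'' | ⟨h1', h2'⟩ | ⟨h1', h2'⟩
      · exact Or.inl (htrans h' h'')
      · exact Or.inr (Or.inl ⟨htrans h' h1', h2'⟩)
      · exact Or.inr (Or.inr ⟨htrans h' h1', h2'⟩)
      · exact Or.inr (Or.inl ⟨h1, htrans h2 h''⟩)
      · exact Or.inl (htrans h1 (htrans (hsymm (htrans h2 h1')) h2'))
      · exact Or.inl (htrans h1 h2')
      · exact Or.inr (Or.inr ⟨h1, htrans h2 h''⟩)
      · exact Or.inl (htrans h1 h2')
      · exact Or.inl (htrans h1 (htrans (hsymm (htrans h2 h1')) h2'))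
  · have hmem : G.conn (insert e S) u v :=
      Relation.EqvGen.rel _ _ ⟨e, Set.mem_insert e S, hends⟩
    have hmono : ∀ {a b : G.V}, G.conn S a b → G.conn (insert e S) a b :=
      fun h => conn_mono (Set.subset_insert e S) h
    have hE' := G.conn_equivalence (insert e S)
    rintro (h' | ⟨h1, h2⟩ | ⟨h1, h2⟩)
    · exact hmono h'
    · exact hE'.trans (hmono h1) (hE'.trans hmem (hmono h2))
    · exact hE'.trans (hmono h1) (hE'.trans (hE'.symm hmem) (hmono h2))

lemma p0S_insert {S : Set G.E} {e : G.E} {u v : G.V} (hends : G.ends e = s(u, v)) :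
    (G.conn S u v → G.p0S (insert e S) = G.p0S S) ∧
    (¬ G.conn S u v → G.p0S (insert e S) + 1 = G.p0S S) :=
  card_quot_insert_pair (G.conn S) (G.conn (insert e S)) (G.conn_equivalence S)
    (G.conn_equivalence _) u v (conn_insert hends)

/-! ### Path vertices are injective -/

lemma walk_getVert_injOn {V : Type} {H : SimpleGraph V} {u v : V} (p : H.Walk u v)
    (hp : p.IsPath) :
    ∀ a ≤ p.length, ∀ b ≤ p.length, p.getVert a = p.getVert b → a = b := by
  induction p with
  | nil =>
    intro a ha b hb _
    simp only [SimpleGraph.Walk.length_nil, Nat.le_zero] at ha hb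
    omega
  | @cons x y z hadj q ih =>
    rw [SimpleGraph.Walk.cons_isPath_iff] at hp
    obtain ⟨hq, hx⟩ := hp
    intro a ha b hb hab
    rw [SimpleGraph.Walk.length_cons] at ha hb
    match a, b with
    | 0, 0 => rfl
    | 0, (b + 1) =>
      exfalso
      apply hx
      rw [SimpleGraph.Walk.mem_support_iff_exists_getVert]
      refine ⟨b, ?_, by omega⟩
      simpa [SimpleGraph.Walk.getVert_zero, SimpleGraph.Walk.getVert_cons_succ] using hab.symm
    | (a + 1), 0 =>
      exfalso
      apply hx
      rw [SimpleGraph.Walk.mem_support_iff_exists_getVert]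
      refine ⟨a, ?_, by omega⟩
      simpa [SimpleGraph.Walk.getVert_zero, SimpleGraph.Walk.getVert_cons_succ] using hab
    | (a + 1), (b + 1) =>
      have := ih hq a (by omega) b (by omega)
        (by simpa [SimpleGraph.Walk.getVert_cons_succ] using hab)
      omega

/-! ### From a monochromatic-cycles hypothesis, connectivity refines to one color -/

lemma mono_reach {c : G.E → Bool} (hmono : G.MonochromaticCycles c) {S : Set G.E}
    {e : G.E} (he : e ∉ S) {u v : G.V} (hends : G.ends e = s(u, v))
    (h : G.conn S u v) : G.conn (S ∩ {f | c f = c e}) u v := by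
  by_cases huv : u = v
  · subst huv
    exact Relation.EqvGen.refl _
  obtain ⟨w⟩ : (G.spanning S).toSimpleGraph.Reachable u v :=
    (spanning_reachable_iff u v).mpr h
  obtain ⟨p, hp⟩ : ∃ p : (G.spanning S).toSimpleGraph.Walk u v, p.IsPath :=
    ⟨w.toPath.1, w.toPath.2⟩
  set m := p.length with hm
  have hm1 : 1 ≤ m := by
    rcases Nat.eq_zero_or_pos m with h0 | h1
    · exact absurd (SimpleGraph.Walk.eq_of_length_eq_zero (p := p) (by omega)) huv
    · exact h1
  have hstep : ∀ i : Fin m, ∃ f, f ∈ S ∧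
      G.ends f = s(p.getVert i.1, p.getVert (i.1 + 1)) := by
    intro i
    have := p.adj_getVert_succ i.2
    obtain ⟨hne, f, hf⟩ := toSimpleGraph_adj.mp this
    exact ⟨f.1, f.2, hf⟩
  choose F hFS hFe using hstep
  haveI : NeZero (m + 1) := ⟨Nat.succ_ne_zero m⟩
  haveI : Fact (1 < m + 1) := ⟨by omega⟩
  have hval1 : (1 : ZMod (m + 1)).val = 1 := ZMod.val_one _
  have hvlt : ∀ k : ZMod (m + 1), k.val < m + 1 := fun k => ZMod.val_lt k
  have hadd : ∀ k : ZMod (m + 1), k.val < m → (k + 1).val = k.val + 1 := by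
    intro k hk
    rw [ZMod.val_add_of_lt (by rw [hval1]; omega), hval1]
  have hlast : ∀ k : ZMod (m + 1), k.val = m → k + 1 = 0 := by
    intro k hk
    have : k = (m : ZMod (m + 1)) := by
      apply ZMod.val_injective
      rw [ZMod.val_cast_of_lt (by omega), hk]
    rw [this]
    have h2 : ((m : ℕ) : ZMod (m + 1)) + 1 = ((m + 1 : ℕ) : ZMod (m + 1)) := by
      push_cast; ring
    rw [h2, ZMod.natCast_self]
  set C : CycleIn G (m + 1) :=
    { vtx := fun k => p.getVert k.val
      edge := fun k => if hk : k.val < m then F ⟨k.val, hk⟩ else e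
      vtx_inj := by
        intro a b hab
        apply ZMod.val_injective
        exact walk_getVert_injOn p hp a.val (by have := hvlt a; omega) b.val
          (by have := hvlt b; omega) hab
      edge_inj := by
        intro a b hab
        dsimp only at hab
        by_cases ha : a.val < m <;> by_cases hb' : b.val < m
        · rw [dif_pos ha, dif_pos hb'] at hab
          have hEnds := congrArg G.ends hab
          rw [hFe ⟨a.val, ha⟩, hFe ⟨b.val, hb'⟩] at hEnds
          apply ZMod.val_injective
          rcases Sym2.eq_iff.mp hEnds with ⟨h1, _⟩ | ⟨h1, h2⟩
          · exact walk_getVert_injOn p hp a.val (by omega) b.val (by omega) h1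
          · have e1 : a.val = b.val + 1 :=
              walk_getVert_injOn p hp a.val (by omega) (b.val + 1) (by omega) h1
            have e2 : a.val + 1 = b.val :=
              walk_getVert_injOn p hp (a.val + 1) (by omega) b.val (by omega) h2
            omega
        · rw [dif_pos ha, dif_neg hb'] at hab
          exact absurd (hab ▸ hFS ⟨a.val, ha⟩) he
        · rw [dif_neg ha, dif_pos hb'] at hab
          exact absurd (hab.symm ▸ hFS ⟨b.val, hb'⟩) he
        · apply ZMod.val_injective
          have := hvlt a; have := hvlt b
          omega
      ends_eq := by
        intro k
        by_cases hk : k.val < m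
        · rw [dif_pos hk, hFe ⟨k.val, hk⟩]
          have h3 : (k + 1).val = k.val + 1 := hadd k hk
          rw [h3]
          rfl
        · have hkm : k.val = m := by have := hvlt k; omega
          rw [dif_neg hk, hends]
          have h1 : k + 1 = 0 := hlast k hkm
          have h2 : p.getVert k.val = v := by rw [hkm, hm]; exact p.getVert_length
          rw [h1, h2]
          show s(u, v) = s(_, p.getVert (0 : ZMod (m + 1)).val)
          rw [ZMod.val_zero]
          exact Sym2.eq_swap.trans (congrArg (fun x : G.V => s(v, x)) p.getVert_zero.symm) } with hC
  have hedge_last : C.edge ((m : ℕ) : ZMod (m + 1)) = e := by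
    show (if hk : ((m : ℕ) : ZMod (m + 1)).val < m then _ else e) = e
    rw [dif_neg (by rw [ZMod.val_cast_of_lt (by omega)]; omega)]
  have hcol : ∀ i : Fin m, c (F i) = c e := by
    intro i
    have hi2 := i.2
    have hvi : ((i.1 : ℕ) : ZMod (m + 1)).val = i.1 := ZMod.val_cast_of_lt (by omega)
    have hedge_i : C.edge ((i.1 : ℕ) : ZMod (m + 1)) = F i := by
      show (if hk : ((i.1 : ℕ) : ZMod (m + 1)).val < m
          then F ⟨((i.1 : ℕ) : ZMod (m + 1)).val, hk⟩ else e) = F i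
      rw [dif_pos (show ((i.1 : ℕ) : ZMod (m + 1)).val < m by rw [hvi]; exact i.2)]
      exact congrArg F (Fin.ext hvi)
    have := hmono (m + 1) C ((i.1 : ℕ) : ZMod (m + 1)) ((m : ℕ) : ZMod (m + 1))
    rw [hedge_i, hedge_last] at this
    exact this
  have hE := G.conn_equivalence (S ∩ {f | c f = c e})
  have hchain : ∀ t, t ≤ m → G.conn (S ∩ {f | c f = c e}) u (p.getVert t) := by
    intro t
    induction t with
    | zero =>
      intro _
      exact cast (congrArg (G.conn (S ∩ {f | c f = c e}) u) p.getVert_zero.symm) (hE.refl u)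
    | succ t iht =>
      intro ht
      refine hE.trans (iht (by omega)) ?_
      exact Relation.EqvGen.rel _ _
        ⟨F ⟨t, by omega⟩, ⟨hFS ⟨t, by omega⟩, hcol ⟨t, by omega⟩⟩, hFe ⟨t, by omega⟩⟩
  have := hchain m le_rfl
  exact cast (congrArg (G.conn (S ∩ {f | c f = c e}) u) p.getVert_length) this

/-! ### Deleting two distinct edges of a cycle separates the ends of one of them -/

lemma cycle_two_le {n : ℕ} (C : G.CycleIn n) {i j : ZMod n} (hij : i ≠ j) : 2 ≤ n := by
  match n with
  | 0 =>
    exfalso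
    have : Finite ℤ := Finite.of_injective C.vtx C.vtx_inj
    exact not_finite ℤ
  | 1 => exact absurd (Subsingleton.elim i j) hij
  | (n + 2) => omega

lemma cycle_disconnect {n : ℕ} (C : G.CycleIn n) {i j : ZMod n} (hij : i ≠ j)
    {S : Set G.E} (hS : ∀ f ∈ S, ∃ k : ZMod n, k ≠ i ∧ k ≠ j ∧ C.edge k = f) :
    ¬ G.conn S (C.vtx i) (C.vtx (i + 1)) := by
  have hn2 : 2 ≤ n := cycle_two_le C hij
  obtain ⟨m, rfl⟩ : ∃ m, n = m + 1 := ⟨n - 1, by omega⟩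
  have hm1 : 1 ≤ m := by omega
  haveI : NeZero (m + 1) := ⟨Nat.succ_ne_zero m⟩
  haveI : Fact (1 < m + 1) := ⟨by omega⟩
  set d : ZMod (m + 1) → ℕ := fun k => (k - (i + 1)).val with hd
  have hd_inj : ∀ k l : ZMod (m + 1), d k = d l → k = l := by
    intro k l hkl
    have h2 := ZMod.val_injective _ hkl
    exact sub_left_inj.mp h2
  have hdi : d i = m := by
    show (i - (i + 1)).val = m
    have h1 : i - (i + 1) = -1 := by ring
    rw [h1]
    exact ZMod.val_neg_one m
  have hdlt : ∀ k : ZMod (m + 1), d k ≤ m := fun k => by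
    show (k - (i + 1)).val ≤ m
    have := ZMod.val_lt (k - (i + 1)); omega
  have hstep : ∀ k : ZMod (m + 1), k ≠ i → d (k + 1) = d k + 1 := by
    intro k hk
    have hkm : d k ≠ m := fun hc => hk (hd_inj _ _ (hc.trans hdi.symm))
    have hlt : d k < m := lt_of_le_of_ne (hdlt k) hkm
    have hlt' : (k - (i + 1)).val < m := hlt
    have h1 : k + 1 - (i + 1) = (k - (i + 1)) + 1 := by ring
    show (k + 1 - (i + 1)).val = (k - (i + 1)).val + 1
    rw [h1, ZMod.val_add_of_lt (by rw [ZMod.val_one]; omega), ZMod.val_one]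
  have hdj : d j < m := by
    have : d j ≠ m := fun hc => hij.symm (hd_inj _ _ (hc.trans hdi.symm))
    have := hdlt j
    omega
  have hdi1 : d (i + 1) = 0 := by
    show (i + 1 - (i + 1)).val = 0
    rw [sub_self, ZMod.val_zero]
  have hφ : ∀ k : ZMod (m + 1), (∃ k', C.vtx k' = C.vtx k ∧ d k' ≤ d j) ↔ d k ≤ d j := by
    intro k
    constructor
    · rintro ⟨k', hk', hdk'⟩
      rwa [C.vtx_inj hk'] at hdk'
    · intro hk
      exact ⟨k, rfl, hk⟩
  have key : ∀ x y : G.V, G.conn S x y →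
      ((∃ k, C.vtx k = x ∧ d k ≤ d j) ↔ (∃ k, C.vtx k = y ∧ d k ≤ d j)) := by
    intro x y hxy
    induction hxy with
    | rel a b hab =>
      obtain ⟨f, hfS, hfe⟩ := hab
      obtain ⟨k, hki, hkj, rfl⟩ := hS f hfS
      rw [C.ends_eq k] at hfe
      have hkd : d k ≤ d j ↔ d (k + 1) ≤ d j := by
        rw [hstep k hki]
        constructor
        · intro h
          have : d k ≠ d j := fun hc => hkj (hd_inj _ _ hc)
          omega
        · omega
      rcases Sym2.eq_iff.mp hfe with ⟨rfl, rfl⟩ | ⟨h1, h2⟩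
      · rw [hφ k, hφ (k + 1)]
        exact hkd
      · rw [← h1, ← h2, hφ k, hφ (k + 1)]
        exact hkd.symm
    | refl a => exact Iff.rfl
    | symm a b _ ih => exact ih.symm
    | trans a b d' _ _ ih1 ih2 => exact ih1.trans ih2
  intro hcon
  have h1 := key _ _ hcon
  rw [hφ i, hφ (i + 1), hdi, hdi1] at h1
  have : m ≤ d j := h1.mpr (by omega)
  omega

lemma ends_exists (G : Multigraph) (e : G.E) : ∃ u v, G.ends e = s(u, v) :=
  Sym2.inductionOn (f := fun z => ∃ u v, z = s(u, v)) (G.ends e) fun x y => ⟨x, y, rfl⟩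

/-! ### The bookkeeping step for inserting one edge -/

/-- The sum `p0(G_b) + p0(G_w)` restricted to the edge set `S`. -/
noncomputable def Ab (G : Multigraph) (c : G.E → Bool) (S : Finset G.E) : ℕ :=
  G.p0S (↑S ∩ {f | c f = true}) + G.p0S (↑S ∩ {f | c f = false})

lemma insert_step (G : Multigraph) (c : G.E → Bool) (S : Finset G.E) (e : G.E)
    (he : e ∉ S) {u v : G.V} (hends : G.ends e = s(u, v)) :
    ∃ δ1 δ2 : ℕ, δ2 ≤ δ1 ∧ δ1 ≤ 1 ∧
      G.Ab c (insert e S) + δ1 = G.Ab c S ∧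
      G.p0S ↑(insert e S) + δ2 = G.p0S ↑S ∧
      (δ1 = δ2 ↔ (G.conn ↑S u v → G.conn (↑S ∩ {f | c f = c e}) u v)) := by
  classical
  set δ1 : ℕ := if G.conn (↑S ∩ {f | c f = c e}) u v then 0 else 1 with hδ1
  set δ2 : ℕ := if G.conn ↑S u v then 0 else 1 with hδ2
  have hsub : (↑S ∩ {f | c f = c e} : Set G.E) ⊆ ↑S := Set.inter_subset_left
  have himp : G.conn (↑S ∩ {f | c f = c e}) u v → G.conn ↑S u v := conn_mono hsub
  refine ⟨δ1, δ2, ?_, ?_, ?_, ?_, ?_⟩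
  · rw [hδ1, hδ2]
    by_cases h1 : G.conn (↑S ∩ {f | c f = c e}) u v
    · rw [if_pos h1, if_pos (himp h1)]
    · rw [if_neg h1]
      split <;> omega
  · rw [hδ1]; split <;> omega
  · -- Ab equation
    have hsplit_same : (↑(insert e S) : Set G.E) ∩ {f | c f = c e} =
        insert e (↑S ∩ {f | c f = c e}) := by
      ext f
      simp only [Finset.coe_insert, Set.mem_inter_iff, Set.mem_insert_iff, Set.mem_setOf_eq]
      constructor
      · rintro ⟨rfl | hf, hcf⟩
        · exact Or.inl rfl
        · exact Or.inr ⟨hf, hcf⟩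
      · rintro (rfl | ⟨hf, hcf⟩)
        · exact ⟨Or.inl rfl, rfl⟩
        · exact ⟨Or.inr hf, hcf⟩
    have hsplit_other : ∀ k : Bool, c e ≠ k →
        (↑(insert e S) : Set G.E) ∩ {f | c f = k} = ↑S ∩ {f | c f = k} := by
      intro k hk
      ext f
      simp only [Finset.coe_insert, Set.mem_inter_iff, Set.mem_insert_iff, Set.mem_setOf_eq]
      constructor
      · rintro ⟨rfl | hf, hcf⟩
        · exact absurd hcf hk
        · exact ⟨hf, hcf⟩
      · rintro ⟨hf, hcf⟩
        exact ⟨Or.inr hf, hcf⟩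
    have hP := p0S_insert (G := G) (S := ↑S ∩ {f | c f = c e}) hends
    rw [hδ1]
    by_cases h1 : G.conn (↑S ∩ {f | c f = c e}) u v
    · rw [if_pos h1]
      have hPeq := hP.1 h1
      cases hce : c e with
      | true =>
        rw [hce] at hsplit_same hPeq h1
        rw [Ab, Ab, hsplit_same, hsplit_other false (by rw [hce]; simp), hPeq]
        omega
      | false =>
        rw [hce] at hsplit_same hPeq h1
        rw [Ab, Ab, hsplit_same, hsplit_other true (by rw [hce]; simp), hPeq]
        omega
    · rw [if_neg h1]
      have hPeq := hP.2 h1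
      cases hce : c e with
      | true =>
        rw [hce] at hsplit_same hPeq h1
        rw [Ab, Ab, hsplit_same, hsplit_other false (by rw [hce]; simp)]
        omega
      | false =>
        rw [hce] at hsplit_same hPeq h1
        rw [Ab, Ab, hsplit_same, hsplit_other true (by rw [hce]; simp)]
        omega
  · -- p0S equation
    have hP := p0S_insert (G := G) (S := (↑S : Set G.E)) hends
    rw [hδ2]
    have hco : (↑(insert e S) : Set G.E) = insert e ↑S := Finset.coe_insert e S
    by_cases h2 : G.conn ↑S u v
    · rw [if_pos h2, hco, hP.1 h2]
      omega
    · rw [if_neg h2, hco, hP.2 h2]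
  · rw [hδ1, hδ2]
    by_cases h1 : G.conn (↑S ∩ {f | c f = c e}) u v
    · rw [if_pos h1, if_pos (himp h1)]
      simp [h1]
    · rw [if_neg h1]
      by_cases h2 : G.conn ↑S u v
      · rw [if_pos h2]
        simp [h1, h2]
      · rw [if_neg h2]
        simp [h1, h2]

/-- For a (not necessarily connected) 2-colored graph,
`p0(G_b) + p0(G_w) ≤ |V(G)| + p0(G)`, with equality iff `G` has no 2-colored
cycle. -/
theorem two_color_p0_bound (G : Multigraph) (c : G.E → Bool) :
    ((G.spanning {e | c e = true}).p0 + (G.spanning {e | c e = false}).p0 ≤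
      G.numV + G.p0) ∧
    ((G.spanning {e | c e = true}).p0 + (G.spanning {e | c e = false}).p0 =
        G.numV + G.p0 ↔ G.MonochromaticCycles c) := by
  classical
  -- the inequality, for every edge subset
  have hineq : ∀ S : Finset G.E, G.Ab c S ≤ G.numV + G.p0S ↑S := by
    intro S
    induction S using Finset.induction_on with
    | empty =>
      rw [Ab, Finset.coe_empty, Set.empty_inter, Set.empty_inter, p0S_empty]
    | @insert e S he ih =>
      obtain ⟨u, v, hends⟩ := ends_exists G e
      obtain ⟨δ1, δ2, h21, h11, hA, hP, _⟩ := insert_step G c S e he hends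
      omega
  -- monochromatic cycles imply equality
  have hmono_eq : G.MonochromaticCycles c →
      G.Ab c Finset.univ = G.numV + G.p0S ↑(Finset.univ : Finset G.E) := by
    intro hmono
    have key : ∀ S : Finset G.E, G.Ab c S = G.numV + G.p0S ↑S := by
      intro S
      induction S using Finset.induction_on with
      | empty =>
        rw [Ab, Finset.coe_empty, Set.empty_inter, Set.empty_inter, p0S_empty]
      | @insert e S he ih =>
        obtain ⟨u, v, hends⟩ := ends_exists G e
        obtain ⟨δ1, δ2, h21, h11, hA, hP, hiff⟩ := insert_step G c S e he hends
        have hcond : G.conn ↑S u v → G.conn (↑S ∩ {f | c f = c e}) u v :=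
          fun h => mono_reach hmono (fun hc => he (Finset.mem_coe.mp hc)) hends h
        have := hiff.mpr hcond
        omega
    exact key _
  -- equality implies monochromatic cycles
  have heq_mono : G.Ab c Finset.univ = G.numV + G.p0S ↑(Finset.univ : Finset G.E) →
      G.MonochromaticCycles c := by
    intro heq n C idx jdx
    by_contra hcne
    have hij : idx ≠ jdx := fun h => hcne (congrArg (fun k => c (C.edge k)) h)
    have hn2 : 2 ≤ n := cycle_two_le C hij
    haveI : NeZero n := ⟨by omega⟩
    set T : Finset G.E := Finset.image C.edge Finset.univ with hT
    -- we may delete all edges outside the cycle, preserving the equality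
    have hdesc : ∀ F : Finset G.E,
        G.Ab c (T ∪ F) = G.numV + G.p0S ↑(T ∪ F) →
        G.Ab c T = G.numV + G.p0S ↑T := by
      intro F
      induction F using Finset.induction_on with
      | empty => rw [Finset.union_empty]; exact id
      | @insert a F ha ih =>
        intro hEq
        rw [Finset.union_insert] at hEq
        by_cases haTF : a ∈ T ∪ F
        · rw [Finset.insert_eq_self.mpr haTF] at hEq
          exact ih hEq
        · obtain ⟨u, v, hends⟩ := ends_exists G a
          obtain ⟨δ1, δ2, h21, h11, hA, hP, _⟩ := insert_step G c (T ∪ F) a haTF hends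
          have := hineq (T ∪ F)
          exact ih (by omega)
    have hEqT : G.Ab c T = G.numV + G.p0S ↑T := by
      apply hdesc Finset.univ
      rw [Finset.union_eq_right.mpr (Finset.subset_univ T)]
      exact heq
    -- extract the local condition at the edge `C.edge idx`
    set e := C.edge idx with he_def
    have heT : e ∈ T := Finset.mem_image.mpr ⟨idx, Finset.mem_univ _, rfl⟩
    set S0 := T.erase e with hS0
    have he0 : e ∉ S0 := Finset.notMem_erase e T
    have hins : insert e S0 = T := Finset.insert_erase heT
    obtain ⟨δ1, δ2, h21, h11, hA, hP, hiff⟩ :=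
      insert_step G c S0 e he0 (C.ends_eq idx)
    rw [hins] at hA hP
    have hineqS0 := hineq S0
    have hδeq : δ1 = δ2 := by omega
    have hcond := hiff.mp hδeq
    -- the two ends of `C.edge idx` are joined around the cycle avoiding that edge
    have haround : ∀ t : ℕ, t ≤ n - 1 →
        G.conn ↑S0 (C.vtx (idx + 1)) (C.vtx (idx + 1 + (t : ZMod n))) := by
      intro t
      induction t with
      | zero =>
        intro _
        rw [Nat.cast_zero, add_zero]
        exact (G.conn_equivalence _).refl _
      | succ t iht =>
        intro ht
        have hmem : C.edge (idx + 1 + (t : ZMod n)) ∈ (↑S0 : Set G.E) := by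
          apply Finset.mem_coe.mpr
          rw [hS0, Finset.mem_erase]
          constructor
          · intro hc
            rw [he_def] at hc
            have heq1 : idx + 1 + (t : ZMod n) = idx := C.edge_inj hc
            have h0 : (1 : ZMod n) + (t : ZMod n) = 0 := by
              have h4 : idx + ((1 : ZMod n) + (t : ZMod n)) = idx + 0 := by
                rw [add_zero, ← add_assoc]; exact heq1
              exact add_left_cancel h4
            have h5 : ((1 + t : ℕ) : ZMod n) = 0 := by push_cast; exact h0
            have h6 : n ∣ 1 + t := (ZMod.natCast_eq_zero_iff _ _).mp h5
            have := Nat.le_of_dvd (by omega) h6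
            omega
          · exact Finset.mem_image.mpr ⟨_, Finset.mem_univ _, rfl⟩
        have hrel : G.conn ↑S0 (C.vtx (idx + 1 + (t : ZMod n)))
            (C.vtx (idx + 1 + (t : ZMod n) + 1)) :=
          Relation.EqvGen.rel _ _ ⟨_, hmem, C.ends_eq _⟩
        have hcast : idx + 1 + ((t + 1 : ℕ) : ZMod n) = idx + 1 + (t : ZMod n) + 1 := by
          push_cast; ring
        rw [hcast]
        exact (G.conn_equivalence _).trans (iht (by omega)) hrel
    have hconnS0 : G.conn ↑S0 (C.vtx idx) (C.vtx (idx + 1)) := by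
      have h1 := haround (n - 1) le_rfl
      have h2 : idx + 1 + ((n - 1 : ℕ) : ZMod n) = idx := by
        have h3 : ((n - 1 : ℕ) : ZMod n) + 1 = 0 := by
          have h4 : n - 1 + 1 = n := by omega
          calc ((n - 1 : ℕ) : ZMod n) + 1 = ((n - 1 + 1 : ℕ) : ZMod n) := by
                push_cast; ring
            _ = 0 := by rw [h4, ZMod.natCast_self]
        have h5 : ((n - 1 : ℕ) : ZMod n) = -1 := eq_neg_of_add_eq_zero_left h3
        rw [h5]; ring
      rw [h2] at h1
      exact (G.conn_equivalence _).symm h1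
    have hconn_cls := hcond hconnS0
    refine cycle_disconnect C hij (S := ↑S0 ∩ {f | c f = c e}) ?_ hconn_cls
    rintro f ⟨hf1, hf2⟩
    have hf1' := Finset.mem_coe.mp hf1
    rw [hS0, Finset.mem_erase] at hf1'
    obtain ⟨hfne, hfT⟩ := hf1'
    obtain ⟨k, -, rfl⟩ := Finset.mem_image.mp hfT
    refine ⟨k, ?_, ?_, rfl⟩
    · intro hc
      rw [hc, ← he_def] at hfne
      exact hfne rfl
    · intro hc
      rw [hc] at hf2
      rw [he_def] at hf2
      exact hcne hf2.symm
  -- put the pieces together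
  have hcuniv : (↑(Finset.univ : Finset G.E) : Set G.E) = Set.univ := Finset.coe_univ
  have hconv1 : G.Ab c Finset.univ =
      (G.spanning {e | c e = true}).p0 + (G.spanning {e | c e = false}).p0 := by
    rw [Ab, hcuniv, Set.univ_inter, Set.univ_inter, spanning_p0, spanning_p0]
  have hconv2 : G.numV + G.p0S ↑(Finset.univ : Finset G.E) = G.numV + G.p0 := by
    rw [hcuniv, p0_eq_p0S_univ]
  refine ⟨?_, ?_, ?_⟩
  · rw [← hconv1, ← hconv2]
    exact hineq Finset.univ
  · intro h
    exact heq_mono (by rw [hconv1, hconv2]; exact h)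
  · intro hmono
    have := hmono_eq hmono
    rw [hconv1, hconv2] at this
    exact this

end Multigraph
end
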